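/- Suppose an algorithm's regret against comparator u ∈ ℝᵈ satisfies Reg_T(u) ≤ A(u) + B(u)·√(∑_{t=1}^T ‖∇f_t(w_t) − ∇f_{t−1}(w_{t−1})‖²) − ∑_{t=1}^T D_{f_t}(u, w_t), where the f_t are convex, differentiable, L-smooth with gradients bounded by G, and f₀ ≡ 0. Then Reg_T(u) ≤ A(u) + 4L·B(u)² + 2B(u)·√(G² + ∑_{t=2}^T ‖∇f_t(u) − ∇f_{t−1}(u)‖²). -/

import Mathlib

/-!
The Bregman divergences subtracted in the hypothesis pay for the gradient variation of the
iterates. For convex `L`-smooth `f`, co-coercivity gives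
`‖∇f_t(w_t) - ∇f_t(u)‖² ≤ 2L D_{f_t}(u, w_t)`. Routing `∇f_t(w_t) - ∇f_{t-1}(w_{t-1})` through
`∇f_t(u)` and `∇f_{t-1}(u)` then bounds the variation of the iterates by
`3 (G² + V_T(u)) + 12 L ∑_t D_{f_t}(u, w_t)`, where `G²` is the first step, from `f₀ ≡ 0`.
After taking square roots, AM-GM absorbs the cross term `4B √(L D)` into `4LB² + D`, and `D`
cancels against the subtracted divergences.
-/

open Finset RealInnerProductSpace

section Gradient

variable {E : Type*} [NormedAddCommGroup E] [InnerProductSpace ℝ E] [CompleteSpace E]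
  {f : E → ℝ} {L : ℝ}

noncomputable def bregmanDiv (f : E → ℝ) (x y : E) : ℝ := f x - f y - ⟪gradient f y, x - y⟫

theorem Differentiable.hasDerivAt_comp_add_smul (hf : Differentiable ℝ f) (x v : E) (s : ℝ) :
    HasDerivAt (fun s : ℝ => f (x + s • v)) ⟪gradient f (x + s • v), v⟫ s := by
  have hline : HasDerivAt (fun s : ℝ => x + s • v) v s := by
    simpa using ((hasDerivAt_id s).smul_const v).const_add x
  exact ((hf _).hasGradientAt.hasFDerivAt.comp_hasDerivAt s hline).congr_deriv (by simp)

theorem ConvexOn.add_inner_gradient_le (hc : ConvexOn ℝ Set.univ f) (hf : Differentiable ℝ f)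
    (x y : E) : f x + ⟪gradient f x, y - x⟫ ≤ f y := by
  have hline : ConvexOn ℝ Set.univ fun s : ℝ => f (x + s • (y - x)) := by
    simpa [Function.comp_def, AffineMap.lineMap_apply, add_comm] using
      hc.comp_affineMap (AffineMap.lineMap x y)
  have hslope := hline.le_slope_of_hasDerivAt (Set.mem_univ 0) (Set.mem_univ 1) one_pos
    (by simpa only [zero_smul, add_zero] using hf.hasDerivAt_comp_add_smul x (y - x) 0)
  simp only [slope_def_field, one_smul, zero_smul, add_zero, add_sub_cancel, sub_zero,
    div_one] at hslope
  linarith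

theorem ConvexOn.bregmanDiv_nonneg (hc : ConvexOn ℝ Set.univ f) (hf : Differentiable ℝ f)
    (x y : E) : 0 ≤ bregmanDiv f x y := by
  have := hc.add_inner_gradient_le hf y x
  unfold bregmanDiv
  linarith

theorem le_add_inner_gradient_add_sq (hf : Differentiable ℝ f)
    (hs : ∀ a b, ‖gradient f a - gradient f b‖ ≤ L * ‖a - b‖) (x y : E) :
    f y ≤ f x + ⟪gradient f x, y - x⟫ + L / 2 * ‖y - x‖ ^ 2 := by
  set v := y - x
  let g : ℝ → ℝ := fun s => f (x + s • v) - s * ⟪gradient f x, v⟫ - L / 2 * s ^ 2 * ‖v‖ ^ 2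
  have hg : ∀ s, HasDerivAt g (⟪gradient f (x + s • v) - gradient f x, v⟫ - L * s * ‖v‖ ^ 2) s := by
    intro s
    refine (((hf.hasDerivAt_comp_add_smul x v s).sub ((hasDerivAt_id s).mul_const
      ⟪gradient f x, v⟫)).sub (((hasDerivAt_pow 2 s).const_mul (L / 2)).mul_const
        (‖v‖ ^ 2))).congr_deriv ?_
    norm_num only [inner_sub_left]; ring
  have hanti : AntitoneOn g (Set.Ici 0) := by
    refine antitoneOn_of_hasDerivWithinAt_nonpos (convex_Ici 0)
      (fun s _ => (hg s).continuousAt.continuousWithinAt) (fun s _ => (hg s).hasDerivWithinAt) ?_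
    intro s hs₀
    rw [interior_Ici, Set.mem_Ioi] at hs₀
    calc ⟪gradient f (x + s • v) - gradient f x, v⟫ - L * s * ‖v‖ ^ 2
        ≤ ‖gradient f (x + s • v) - gradient f x‖ * ‖v‖ - L * s * ‖v‖ ^ 2 := by
          gcongr; exact real_inner_le_norm _ _
      _ ≤ L * ‖s • v‖ * ‖v‖ - L * s * ‖v‖ ^ 2 := by
          gcongr; simpa using hs (x + s • v) x
      _ = 0 := by rw [norm_smul, Real.norm_of_nonneg hs₀.le]; ring
  have := hanti Set.self_mem_Ici (Set.mem_Ici.mpr zero_le_one) zero_le_one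
  simp only [g, one_smul, zero_smul, add_zero, v, add_sub_cancel] at this
  linarith

theorem norm_gradient_sub_sq_le_bregmanDiv (hL : 0 < L) (hc : ConvexOn ℝ Set.univ f)
    (hf : Differentiable ℝ f) (hs : ∀ a b, ‖gradient f a - gradient f b‖ ≤ L * ‖a - b‖)
    (x y : E) : ‖gradient f x - gradient f y‖ ^ 2 ≤ 2 * L * bregmanDiv f x y := by
  set g := gradient f x - gradient f y
  -- Evaluate the descent lemma from `x` and the convexity bound from `y` at the gradient step
  -- `z`: the two estimates of `f z` combine into the claim.
  set z := x - L⁻¹ • g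
  have hdesc := le_add_inner_gradient_add_sq hf hs x z
  have hconv := hc.add_inner_gradient_le hf y z
  have hzx : z - x = -(L⁻¹ • g) := by simp [z]
  have hzy : z - y = (x - y) - L⁻¹ • g := by simp only [z]; abel
  have hgg : ⟪gradient f x, g⟫ - ⟪gradient f y, g⟫ = ‖g‖ ^ 2 := by
    rw [← inner_sub_left, real_inner_self_eq_norm_sq]
  rw [hzx, norm_neg, norm_smul, Real.norm_of_nonneg (inv_nonneg.mpr hL.le), inner_neg_right,
    real_inner_smul_right] at hdesc
  rw [hzy, inner_sub_right, real_inner_smul_right] at hconv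
  have hdiv : ‖g‖ ^ 2 / (2 * L) ≤ bregmanDiv f x y := by
    unfold bregmanDiv
    have : L / 2 * (L⁻¹ * ‖g‖) ^ 2 = L⁻¹ * ‖g‖ ^ 2 / 2 := by field_simp
    rw [this] at hdesc
    have : ‖g‖ ^ 2 / (2 * L) = L⁻¹ * ‖g‖ ^ 2 / 2 := by field_simp
    have : L⁻¹ * ⟪gradient f x, g⟫ - L⁻¹ * ⟪gradient f y, g⟫ = L⁻¹ * ‖g‖ ^ 2 := by
      rw [← mul_sub, hgg]
    linarith
  rwa [div_le_iff₀' (by positivity)] at hdiv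

end Gradient

theorem norm_add₃_sq_le {F : Type*} [SeminormedAddCommGroup F] (a b c : F) :
    ‖a + b + c‖ ^ 2 ≤ 3 * (‖a‖ ^ 2 + ‖b‖ ^ 2 + ‖c‖ ^ 2) := by
  nlinarith [norm_add₃_le (a := a) (b := b) (c := c), norm_nonneg (a + b + c), norm_nonneg a,
    norm_nonneg b, norm_nonneg c, sq_nonneg (‖a‖ - ‖b‖), sq_nonneg (‖a‖ - ‖c‖),
    sq_nonneg (‖b‖ - ‖c‖)]

theorem Finset.sum_Icc_one_sub_one_add {M : Type*} [AddCommMonoid M] (h : ℕ → M) (T : ℕ) :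
    ∑ t ∈ Icc 1 T, h (t - 1) + h T = h 0 + ∑ t ∈ Icc 1 T, h t := by
  induction T with
  | zero => simp [add_comm]
  | succ T ih =>
    rw [sum_Icc_succ_top (by omega), sum_Icc_succ_top (by omega), Nat.add_sub_cancel, ih,
      add_assoc]

theorem sum_norm_sub_prev_sq_le_sq_add {F : Type*} [SeminormedAddCommGroup F] {b : ℕ → F}
    {G : ℝ} {T : ℕ} (hb0 : b 0 = 0) (hb : ∀ t ∈ Icc 1 T, ‖b t‖ ≤ G) :
    ∑ t ∈ Icc 1 T, ‖b t - b (t - 1)‖ ^ 2 ≤ G ^ 2 + ∑ t ∈ Icc 2 T, ‖b t - b (t - 1)‖ ^ 2 := by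
  rcases Nat.eq_zero_or_pos T with rfl | hT
  · simp [sq_nonneg]
  rw [← insert_Icc_add_one_left_eq_Icc hT, sum_insert (by simp), Nat.sub_self, hb0, sub_zero,
    one_add_one_eq_two]
  gcongr
  exact hb 1 (by simp; omega)

theorem sum_norm_sub_prev_sq_le {F : Type*} [SeminormedAddCommGroup F] {a b : ℕ → F}
    (hab : a 0 = b 0) (T : ℕ) :
    ∑ t ∈ Icc 1 T, ‖a t - a (t - 1)‖ ^ 2 ≤
      3 * ∑ t ∈ Icc 1 T, ‖b t - b (t - 1)‖ ^ 2 + 6 * ∑ t ∈ Icc 1 T, ‖a t - b t‖ ^ 2 := by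
  set c : ℕ → ℝ := fun t => ‖a t - b t‖ ^ 2
  have hshift : ∑ t ∈ Icc 1 T, c (t - 1) ≤ ∑ t ∈ Icc 1 T, c t := by
    have := sum_Icc_one_sub_one_add c T
    simp only [c, hab, sub_self, norm_zero] at this
    nlinarith [sq_nonneg ‖a T - b T‖]
  have hterm : ∀ t ∈ Icc 1 T, ‖a t - a (t - 1)‖ ^ 2 ≤
      3 * ‖b t - b (t - 1)‖ ^ 2 + 3 * c t + 3 * c (t - 1) := by
    intro t _
    have := norm_add₃_sq_le (a t - b t) (b t - b (t - 1)) (b (t - 1) - a (t - 1))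
    rw [show a t - b t + (b t - b (t - 1)) + (b (t - 1) - a (t - 1)) = a t - a (t - 1) by abel,
      norm_sub_rev (b (t - 1))] at this
    linarith
  calc ∑ t ∈ Icc 1 T, ‖a t - a (t - 1)‖ ^ 2
      ≤ ∑ t ∈ Icc 1 T, (3 * ‖b t - b (t - 1)‖ ^ 2 + 3 * c t + 3 * c (t - 1)) := sum_le_sum hterm
    _ = 3 * ∑ t ∈ Icc 1 T, ‖b t - b (t - 1)‖ ^ 2 + 3 * ∑ t ∈ Icc 1 T, c t
          + 3 * ∑ t ∈ Icc 1 T, c (t - 1) := by simp only [sum_add_distrib, mul_sum]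
    _ ≤ _ := by linarith

theorem mul_sqrt_sub_le {B D L S X : ℝ} (hB : 0 ≤ B) (hL : 0 ≤ L) (hD : 0 ≤ D) (hX : 0 ≤ X)
    (hS : S ≤ 4 * X + 16 * L * D) : B * √S - D ≤ 4 * L * B ^ 2 + 2 * B * √X := by
  have hsqrt : √S ≤ 2 * √X + 4 * √L * √D := by
    rw [Real.sqrt_le_iff]
    refine ⟨by positivity, ?_⟩
    nlinarith [Real.sq_sqrt hX, Real.sq_sqrt hL, Real.sq_sqrt hD, Real.sqrt_nonneg X,
      mul_nonneg (Real.sqrt_nonneg L) (Real.sqrt_nonneg D)]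
  nlinarith [mul_le_mul_of_nonneg_left hsqrt hB, sq_nonneg (2 * B * √L - √D), Real.sq_sqrt hL,
    Real.sq_sqrt hD]

theorem stmt_11_general {d : ℕ} (T : ℕ) (L G A B : ℝ) (hL : 0 < L)
    (hB : 0 ≤ B)
    (f : ℕ → EuclideanSpace ℝ (Fin d) → ℝ)
    (hf0 : f 0 = fun _ => (0 : ℝ))
    (hconv : ∀ t ∈ Finset.Icc 1 T, ConvexOn ℝ Set.univ (f t))
    (hdiff : ∀ t ∈ Finset.Icc 1 T, Differentiable ℝ (f t))
    (hsmooth : ∀ t ∈ Finset.Icc 1 T, ∀ x y,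
      ‖gradient (f t) x - gradient (f t) y‖ ≤ L * ‖x - y‖)
    (hgrad : ∀ t ∈ Finset.Icc 1 T, ∀ x, ‖gradient (f t) x‖ ≤ G)
    (w : ℕ → EuclideanSpace ℝ (Fin d)) (u : EuclideanSpace ℝ (Fin d))
    (hreg : ∑ t ∈ Finset.Icc 1 T, (f t (w t) - f t u) ≤
      A + B * Real.sqrt (∑ t ∈ Finset.Icc 1 T,
          ‖gradient (f t) (w t) - gradient (f (t - 1)) (w (t - 1))‖ ^ 2)
        - ∑ t ∈ Finset.Icc 1 T, (f t u - f t (w t) - ⟪gradient (f t) (w t), u - w t⟫)) :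
    ∑ t ∈ Finset.Icc 1 T, (f t (w t) - f t u) ≤
      A + 4 * L * B ^ 2 + 2 * B * Real.sqrt (G ^ 2 + ∑ t ∈ Finset.Icc 2 T,
        ‖gradient (f t) u - gradient (f (t - 1)) u‖ ^ 2) := by
  set D := ∑ t ∈ Icc 1 T, bregmanDiv (f t) u (w t)
  set V := ∑ t ∈ Icc 2 T, ‖gradient (f t) u - gradient (f (t - 1)) u‖ ^ 2
  set S := ∑ t ∈ Icc 1 T, ‖gradient (f t) (w t) - gradient (f (t - 1)) (w (t - 1))‖ ^ 2
  change _ ≤ A + B * √S - D at hreg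
  have hD : 0 ≤ D := sum_nonneg fun t ht => (hconv t ht).bregmanDiv_nonneg (hdiff t ht) u (w t)
  have hgrad0 (x) : gradient (f 0) x = 0 := by simp [hf0]
  have hcoco : ∑ t ∈ Icc 1 T, ‖gradient (f t) (w t) - gradient (f t) u‖ ^ 2 ≤ 2 * L * D := by
    rw [mul_sum]
    refine sum_le_sum fun t ht => ?_
    rw [norm_sub_rev]
    exact norm_gradient_sub_sq_le_bregmanDiv hL (hconv t ht) (hdiff t ht) (hsmooth t ht) u (w t)
  have hvariation : ∑ t ∈ Icc 1 T, ‖gradient (f t) u - gradient (f (t - 1)) u‖ ^ 2 ≤ G ^ 2 + V :=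
    sum_norm_sub_prev_sq_le_sq_add (b := fun t => gradient (f t) u) (hgrad0 u)
      fun t ht => hgrad t ht u
  have hS : S ≤ 4 * (G ^ 2 + V) + 16 * L * D :=
    calc S ≤ 3 * ∑ t ∈ Icc 1 T, ‖gradient (f t) u - gradient (f (t - 1)) u‖ ^ 2
          + 6 * ∑ t ∈ Icc 1 T, ‖gradient (f t) (w t) - gradient (f t) u‖ ^ 2 :=
          sum_norm_sub_prev_sq_le (a := fun t => gradient (f t) (w t))
            (b := fun t => gradient (f t) u) (by simp only [hgrad0]) T
      _ ≤ 3 * (G ^ 2 + V) + 6 * (2 * L * D) := by gcongr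
      _ ≤ 4 * (G ^ 2 + V) + 16 * L * D := by
          have : 0 ≤ V := by positivity
          nlinarith [mul_nonneg hL.le hD, sq_nonneg G]
  linarith [mul_sqrt_sub_le hB hL.le hD (by positivity) hS]

/-- Static-comparator optimistic-to-gradient-variation reduction: if the regret
against `u` satisfies
`Reg ≤ A + B √(∑_t ‖∇f_t(w_t) − ∇f_{t−1}(w_{t−1})‖²) − ∑_t D_{f_t}(u, w_t)`
for convex differentiable `L`-smooth losses with `G`-bounded gradients and `f₀ ≡ 0`,
then `Reg ≤ A + 4 L B² + 2 B √(G² + ∑_{t=2}^T ‖∇f_t(u) − ∇f_{t−1}(u)‖²)`. -/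
theorem stmt_11 {d : ℕ} (T : ℕ) (L G A B : ℝ) (hL : 0 < L) (hG : 0 ≤ G)
    (hA : 0 ≤ A) (hB : 0 ≤ B)
    (f : ℕ → EuclideanSpace ℝ (Fin d) → ℝ)
    (hf0 : f 0 = fun _ => (0 : ℝ))
    (hconv : ∀ t ∈ Finset.Icc 1 T, ConvexOn ℝ Set.univ (f t))
    (hdiff : ∀ t ∈ Finset.Icc 1 T, Differentiable ℝ (f t))
    (hsmooth : ∀ t ∈ Finset.Icc 1 T, ∀ x y,
      ‖gradient (f t) x - gradient (f t) y‖ ≤ L * ‖x - y‖)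
    (hgrad : ∀ t ∈ Finset.Icc 1 T, ∀ x, ‖gradient (f t) x‖ ≤ G)
    (w : ℕ → EuclideanSpace ℝ (Fin d)) (u : EuclideanSpace ℝ (Fin d))
    (hreg : ∑ t ∈ Finset.Icc 1 T, (f t (w t) - f t u) ≤
      A + B * Real.sqrt (∑ t ∈ Finset.Icc 1 T,
          ‖gradient (f t) (w t) - gradient (f (t - 1)) (w (t - 1))‖ ^ 2)
        - ∑ t ∈ Finset.Icc 1 T, (f t u - f t (w t) - ⟪gradient (f t) (w t), u - w t⟫)) :
    ∑ t ∈ Finset.Icc 1 T, (f t (w t) - f t u) ≤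
      A + 4 * L * B ^ 2 + 2 * B * Real.sqrt (G ^ 2 + ∑ t ∈ Finset.Icc 2 T,
        ‖gradient (f t) u - gradient (f (t - 1)) u‖ ^ 2) :=
  stmt_11_general T L G A B hL hB f hf0 hconv hdiff hsmooth hgrad w u hreg
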